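/- arXiv:0810.5766 — 7 statements merged into one kernel-verified Lean document; each statement's English description precedes it below -/
import Mathlib

section
/- Let M > 0, 0 < a < M, r₊ = M + √(M² − a²), and let E, L, K ∈ ℝ with E ≠ 0, K ≥ 0 and (r₊² + a²)E ≠ aL. Then the quartic polynomial P(r) = ((r² + a²)E − aL)² − K(r² − 2Mr + a²) has, counted with multiplicity, either zero or exactly two real roots in the open interval (r₊, ∞). -/
open Polynomial

private lemma multiset_prod_pos (s : Multiset ℝ) (h : ∀ x ∈ s, 0 < x) : 0 < s.prod := by
  induction s using Multiset.induction_on with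
  | empty => simp
  | cons a t ih =>
    rw [Multiset.prod_cons]
    exact mul_pos (h a (Multiset.mem_cons_self a t))
      (ih fun x hx => h x (Multiset.mem_cons_of_mem hx))

private lemma multiset_sum_pos (s : Multiset ℝ) (h : ∀ x ∈ s, 0 < x) (hs : s ≠ 0) :
    0 < s.sum := by
  induction s using Multiset.induction_on with
  | empty => exact absurd rfl hs
  | cons a t ih =>
    rw [Multiset.sum_cons]
    rcases eq_or_ne t 0 with rfl | hs'
    · simpa using h a (Multiset.mem_cons_self a 0)
    · exact add_pos (h a (Multiset.mem_cons_self a t))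
        (ih (fun x hx => h x (Multiset.mem_cons_of_mem hx)) hs')

private lemma quartic_coeff4 (b4 b2 b1 b0 : ℝ) :
    (C b4 * X ^ 4 + C b2 * X ^ 2 + C b1 * X + C b0).coeff 4 = b4 := by
  simp [coeff_add, coeff_C_mul, coeff_X_pow, coeff_C, coeff_X]

private lemma quartic_coeff3 (b4 b2 b1 b0 : ℝ) :
    (C b4 * X ^ 4 + C b2 * X ^ 2 + C b1 * X + C b0).coeff 3 = 0 := by
  simp [coeff_add, coeff_C_mul, coeff_X_pow, coeff_C, coeff_X]

private lemma quartic_natDegree (b4 b2 b1 b0 : ℝ) (hb4 : b4 ≠ 0) :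
    (C b4 * X ^ 4 + C b2 * X ^ 2 + C b1 * X + C b0).natDegree = 4 := by
  compute_degree!

/-- If a real polynomial has positive leading coefficient, positive degree, and is positive
at `t`, then the number of roots (with multiplicity) in `(t, ∞)` is even. -/
private lemma even_card_roots_filter_gt (P : ℝ[X]) (hlead : 0 < P.leadingCoeff)
    (hdeg : 0 < P.degree) (t : ℝ) (ht : 0 < P.eval t) :
    Even (Multiset.card (P.roots.filter (fun r => t < r))) := by
  have hP0 : P ≠ 0 := fun h => by simp [h] at hlead
  obtain ⟨q, hq⟩ := P.prod_multiset_X_sub_C_dvd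
  have hq0 : q ≠ 0 := by
    rintro rfl; rw [mul_zero] at hq; exact hP0 hq
  have hprod0 : (P.roots.map fun a => X - C a).prod ≠ 0 := by
    rintro h; rw [h, zero_mul] at hq; exact hP0 hq
  -- q has no real roots
  have hqroots : q.roots = 0 := by
    have := roots_mul (p := (P.roots.map fun a => X - C a).prod) (q := q) (hq ▸ hP0)
    rw [← hq, roots_multiset_prod_X_sub_C] at this
    have := congrArg Multiset.card this
    rw [Multiset.card_add] at this
    exact Multiset.card_eq_zero.mp (by omega)
  have hqne : ∀ x : ℝ, q.eval x ≠ 0 := by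
    intro x hx
    have : x ∈ q.roots := (mem_roots hq0).mpr hx
    simp [hqroots] at this
  -- evaluation identity
  have hev : ∀ x : ℝ, P.eval x = (P.roots.map fun r => x - r).prod * q.eval x := by
    intro x
    conv_lhs => rw [hq]
    rw [eval_mul, eval_multiset_prod, Multiset.map_map]
    simp
  -- choose a big point
  have htend : Filter.Tendsto (fun x => P.eval x) Filter.atTop Filter.atTop :=
    P.tendsto_atTop_of_leadingCoeff_nonneg hdeg hlead.le
  obtain ⟨x₀, hx₀P, hx₀t, hx₀s⟩ :
      ∃ x₀, 0 < P.eval x₀ ∧ t < x₀ ∧ (P.roots.map fun r => |r|).sum < x₀ := by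
    have h1 := htend.eventually_gt_atTop 0
    have h2 := Filter.eventually_gt_atTop t
    have h3 := Filter.eventually_gt_atTop ((P.roots.map fun r => |r|).sum)
    obtain ⟨x₀, hx⟩ := ((h1.and h2).and h3).exists
    exact ⟨x₀, hx.1.1, hx.1.2, hx.2⟩
  have hroot_lt : ∀ r ∈ P.roots, r < x₀ := by
    intro r hr
    have h1 : |r| ≤ (P.roots.map fun r => |r|).sum := by
      apply Multiset.single_le_sum
      · intro y hy
        obtain ⟨z, _, rfl⟩ := Multiset.mem_map.mp hy
        exact abs_nonneg z
      · exact Multiset.mem_map_of_mem _ hr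
    exact lt_of_le_of_lt (le_abs_self r) (lt_of_le_of_lt h1 hx₀s)
  -- q is positive at x₀
  have hqx₀ : 0 < q.eval x₀ := by
    have hprodpos : 0 < (P.roots.map fun r => x₀ - r).prod := by
      apply multiset_prod_pos
      intro y hy
      obtain ⟨r, hr, rfl⟩ := Multiset.mem_map.mp hy
      linarith [hroot_lt r hr]
    have := hev x₀
    nlinarith [hx₀P]
  -- q is positive at t (no sign change since q has no roots)
  have hqt : 0 < q.eval t := by
    rcases lt_or_gt_of_ne (hqne t) with hneg | hpos
    · exfalso
      have hcont : ContinuousOn (fun x => q.eval x) (Set.uIcc t x₀) :=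
        (q.continuous_aeval).continuousOn
      have h0 : (0 : ℝ) ∈ Set.uIcc (q.eval t) (q.eval x₀) :=
        Set.mem_uIcc.mpr (Or.inl ⟨hneg.le, hqx₀.le⟩)
      obtain ⟨c, _, hc⟩ := intermediate_value_uIcc hcont h0
      exact hqne c hc
    · exact hpos
  -- the product over all roots at t is positive
  have hprodt : 0 < (P.roots.map fun r => t - r).prod := by
    have := hev t
    nlinarith [ht, hqt]
  -- split the roots
  have htnotroot : ∀ r ∈ P.roots, r ≠ t := by
    rintro r hr rfl
    have : P.eval r = 0 := (isRoot_of_mem_roots hr)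
    linarith
  set S₁ := P.roots.filter (fun r => t < r) with hS₁
  set S₂ := P.roots.filter (fun r => ¬ t < r) with hS₂
  have hsplit : S₁ + S₂ = P.roots := Multiset.filter_add_not _ _
  have hprodsplit : (P.roots.map fun r => t - r).prod
      = (S₁.map fun r => t - r).prod * (S₂.map fun r => t - r).prod := by
    rw [← hsplit, Multiset.map_add, Multiset.prod_add]
  have hS₂pos : 0 < (S₂.map fun r => t - r).prod := by
    apply multiset_prod_pos
    intro y hy
    obtain ⟨r, hr, rfl⟩ := Multiset.mem_map.mp hy
    have hr' := Multiset.mem_of_mem_filter hr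
    have h1 : ¬ t < r := (Multiset.mem_filter.mp hr).2
    have h2 : r ≠ t := htnotroot r hr'
    have : r < t := lt_of_le_of_ne (not_lt.mp h1) h2
    linarith
  have hS₁pos : 0 < (S₁.map fun r => t - r).prod := by
    nlinarith [hprodt, hS₂pos, hprodsplit]
  -- the product over S₁ is (-1)^n times a positive number
  have hS₁prod : (S₁.map fun r => t - r).prod
      = (-1 : ℝ) ^ Multiset.card S₁ * (S₁.map fun r => r - t).prod := by
    have : (S₁.map fun r => t - r) = (S₁.map fun r => r - t).map Neg.neg := by
      rw [Multiset.map_map]; congr 1; funext r; simp [neg_sub]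
    rw [this, Multiset.prod_map_neg, Multiset.card_map]
  have hS₁pos' : 0 < (S₁.map fun r => r - t).prod := by
    apply multiset_prod_pos
    intro y hy
    obtain ⟨r, hr, rfl⟩ := Multiset.mem_map.mp hy
    have : t < r := (Multiset.mem_filter.mp hr).2
    linarith
  by_contra hodd
  have hodd' : Odd (Multiset.card S₁) := Nat.not_even_iff_odd.mp hodd
  have : ((-1 : ℝ)) ^ Multiset.card S₁ = -1 := hodd'.neg_one_pow
  rw [hS₁prod, this] at hS₁pos
  nlinarith [hS₁pos', hS₁pos]

/-- **Trapped null geodesics in Kerr: root count of the radial polynomial.**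
For Kerr parameters `M > 0`, `0 < a < M`, with `r₊ = M + √(M² − a²)`, and conserved
quantities `E ≠ 0`, `K ≥ 0`, `L` with `(r₊² + a²)E ≠ aL`, the quartic
`P(r) = ((r² + a²)E − aL)² − K(r² − 2Mr + a²)` has, counted with multiplicity,
either zero or exactly two real roots in `(r₊, ∞)`. -/
theorem kerr_radial_polynomial_root_count
    (M a E L K : ℝ) (hM : 0 < M) (ha : 0 < a) (haM : a < M)
    (hE : E ≠ 0) (hK : 0 ≤ K)
    (hgen : ((M + Real.sqrt (M ^ 2 - a ^ 2)) ^ 2 + a ^ 2) * E ≠ a * L) :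
    let rplus : ℝ := M + Real.sqrt (M ^ 2 - a ^ 2)
    let P : Polynomial ℝ :=
      ((X ^ 2 + C (a ^ 2)) * C E - C (a * L)) ^ 2 -
        C K * (X ^ 2 - C (2 * M) * X + C (a ^ 2))
    Multiset.card (P.roots.filter (fun r => rplus < r)) = 0 ∨
      Multiset.card (P.roots.filter (fun r => rplus < r)) = 2 := by
  intro rplus P
  have hsq : Real.sqrt (M ^ 2 - a ^ 2) ^ 2 = M ^ 2 - a ^ 2 :=
    Real.sq_sqrt (by nlinarith)
  have hs0 : 0 ≤ Real.sqrt (M ^ 2 - a ^ 2) := Real.sqrt_nonneg _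
  have hrp_pos : 0 < rplus := by simp only [rplus]; linarith
  -- Δ(r₊) = 0
  have hΔ : rplus ^ 2 - 2 * M * rplus + a ^ 2 = 0 := by
    simp only [rplus]; nlinarith [hsq]
  -- P(r₊) > 0
  have hPt : 0 < P.eval rplus := by
    have hne : (rplus ^ 2 + a ^ 2) * E - a * L ≠ 0 := by
      simp only [rplus] at hgen ⊢
      intro h; exact hgen (by linarith)
    have hev : P.eval rplus = ((rplus ^ 2 + a ^ 2) * E - a * L) ^ 2 := by
      simp only [P, eval_sub, eval_pow, eval_mul, eval_add, eval_C, eval_X]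
      nlinarith [hΔ]
    rw [hev]
    positivity
  -- explicit expansion of P
  have hPform : P = C (E ^ 2) * X ^ 4 + C (2 * E * (a ^ 2 * E - a * L) - K) * X ^ 2 +
      C (2 * M * K) * X + C ((a ^ 2 * E - a * L) ^ 2 - K * a ^ 2) := by
    simp only [P]
    push_cast
    simp only [C_mul, C_sub, C_add, C_pow, map_ofNat]
    ring
  have hE2 : (E ^ 2 : ℝ) ≠ 0 := pow_ne_zero 2 hE
  have hdeg : P.natDegree = 4 := by
    rw [hPform]; exact quartic_natDegree _ _ _ _ hE2
  have hP0 : P ≠ 0 := by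
    intro h; rw [h] at hdeg; simp at hdeg
  have hlead : P.leadingCoeff = E ^ 2 := by
    rw [leadingCoeff, hdeg, hPform]; exact quartic_coeff4 _ _ _ _
  have hcoeff3 : P.coeff 3 = 0 := by
    rw [hPform]; exact quartic_coeff3 _ _ _ _
  have hleadpos : 0 < P.leadingCoeff := by rw [hlead]; positivity
  have hdegpos : 0 < P.degree := by
    rw [degree_eq_natDegree hP0, hdeg]; norm_num
  -- even number of roots beyond r₊
  have heven := even_card_roots_filter_gt P hleadpos hdegpos rplus hPt
  have hle4 : Multiset.card (P.roots.filter (fun r => rplus < r)) ≤ 4 := by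
    calc Multiset.card (P.roots.filter (fun r => rplus < r))
        ≤ Multiset.card P.roots := Multiset.card_le_card (Multiset.filter_le _ _)
      _ ≤ P.natDegree := P.card_roots'
      _ = 4 := hdeg
  -- rule out 4 roots
  have hne4 : Multiset.card (P.roots.filter (fun r => rplus < r)) ≠ 4 := by
    intro h4
    have hcard : Multiset.card P.roots = 4 := le_antisymm (hdeg ▸ P.card_roots')
      (by rw [← h4]; exact Multiset.card_le_card (Multiset.filter_le _ _))
    have hfeq : P.roots.filter (fun r => rplus < r) = P.roots :=
      Multiset.eq_of_le_of_card_le (Multiset.filter_le _ _) (by omega)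
    have hallgt : ∀ r ∈ P.roots, rplus < r := by
      intro r hr
      rw [← hfeq] at hr
      exact (Multiset.mem_filter.mp hr).2
    -- normalize to a monic polynomial
    set Q : ℝ[X] := C (E ^ 2)⁻¹ * P with hQ
    have hQroots : Q.roots = P.roots := roots_C_mul P (inv_ne_zero hE2)
    have hQdeg : Q.natDegree = 4 := by
      rw [hQ, natDegree_C_mul (inv_ne_zero hE2), hdeg]
    have hQmonic : Q.Monic := by
      rw [Monic, hQ, leadingCoeff_mul, leadingCoeff_C, hlead]
      field_simp
    have hQsplits : Splits Q := by
      rw [splits_iff_card_roots, hQroots, hQdeg, hcard]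
    have hsum := hQsplits.nextCoeff_eq_neg_sum_roots_of_monic hQmonic
    have hnext : Q.nextCoeff = 0 := by
      rw [nextCoeff_of_natDegree_pos (by rw [hQdeg]; norm_num), hQdeg]
      rw [hQ, coeff_C_mul, hcoeff3, mul_zero]
    rw [hQroots, hnext] at hsum
    have hsumpos : 0 < P.roots.sum := by
      apply multiset_sum_pos
      · intro x hx
        exact lt_trans hrp_pos (hallgt x hx)
      · intro h
        rw [h] at hcard
        simp at hcard
    linarith
  obtain ⟨k, hk⟩ := heven
  interval_cases h : Multiset.card (P.roots.filter (fun r => rplus < r)) <;> omega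
end

section
/- Let M > 0, 0 ≤ a < M, r₊ = M + √(M² − a²), E ≠ 0, L ∈ ℝ, K > 0, and suppose r₀ > r₊ satisfies P(r₀) = P′(r₀) = 0 where P(r) = ((r² + a²)E − aL)² − KΔ(r), Δ(r) = r² − 2Mr + a². If in addition θ ∈ (0, π) satisfies K sin²θ ≥ (L − Ea sin²θ)², then, with ρ² = r₀² + a²cos²θ, one has the inequality (2r₀Δ(r₀) − (r₀ − M)ρ²)² ≤ 4a²r₀²Δ(r₀) sin²θ. -/
open Real

/-- **Necessary condition for trapping in Kerr.** Suppose `r₀ > r₊ = M + √(M² − a²)`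
is a double root of `P(r) = ((r² + a²)E − aL)² − KΔ(r)` (with `Δ(r) = r² − 2Mr + a²`),
and `θ ∈ (0, π)` satisfies `K sin²θ ≥ (L − Ea sin²θ)²`. Then, with
`ρ² = r₀² + a²cos²θ`, one has `(2r₀Δ(r₀) − (r₀ − M)ρ²)² ≤ 4a²r₀²Δ(r₀) sin²θ`. -/
theorem kerr_trapping_necessary_condition
    (M a E L K r₀ θ : ℝ) (hM : 0 < M) (ha : 0 ≤ a) (haM : a < M)
    (hE : E ≠ 0) (hK : 0 < K)
    (hr : M + Real.sqrt (M ^ 2 - a ^ 2) < r₀)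
    (hP : ((r₀ ^ 2 + a ^ 2) * E - a * L) ^ 2 - K * (r₀ ^ 2 - 2 * M * r₀ + a ^ 2) = 0)
    (hP' : deriv (fun r : ℝ =>
        ((r ^ 2 + a ^ 2) * E - a * L) ^ 2 - K * (r ^ 2 - 2 * M * r + a ^ 2)) r₀ = 0)
    (hθ : 0 < θ) (hθπ : θ < π)
    (hpolar : (L - E * a * Real.sin θ ^ 2) ^ 2 ≤ K * Real.sin θ ^ 2) :
    (2 * r₀ * (r₀ ^ 2 - 2 * M * r₀ + a ^ 2)
        - (r₀ - M) * (r₀ ^ 2 + a ^ 2 * Real.cos θ ^ 2)) ^ 2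
      ≤ 4 * a ^ 2 * r₀ ^ 2 * (r₀ ^ 2 - 2 * M * r₀ + a ^ 2) * Real.sin θ ^ 2 := by
  -- Compute the derivative
  have hder : HasDerivAt (fun r : ℝ =>
      ((r ^ 2 + a ^ 2) * E - a * L) ^ 2 - K * (r ^ 2 - 2 * M * r + a ^ 2))
      (2 * ((r₀ ^ 2 + a ^ 2) * E - a * L) * (2 * r₀ * E) - K * (2 * r₀ - 2 * M)) r₀ := by
    have h1 : HasDerivAt (fun r : ℝ => ((r ^ 2 + a ^ 2) * E - a * L) ^ 2)
        (2 * ((r₀ ^ 2 + a ^ 2) * E - a * L) * (2 * r₀ * E)) r₀ := by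
      have := ((((hasDerivAt_pow 2 r₀).add_const (a ^ 2)).mul_const E).sub_const (a * L)).fun_pow 2
      exact this.congr_deriv (by ring)
    have h2 : HasDerivAt (fun r : ℝ => K * (r ^ 2 - 2 * M * r + a ^ 2))
        (K * (2 * r₀ - 2 * M)) r₀ := by
      have := (((hasDerivAt_pow 2 r₀).sub ((hasDerivAt_id r₀).const_mul (2 * M))).add_const
        (a ^ 2)).const_mul K
      exact this.congr_deriv (by ring)
    exact h1.sub h2
  rw [hder.deriv] at hP'
  set Q := (r₀ ^ 2 + a ^ 2) * E - a * L with hQ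
  set D := r₀ ^ 2 - 2 * M * r₀ + a ^ 2 with hD
  have hQ2 : Q ^ 2 = K * D := by linarith
  have hQ1 : 2 * r₀ * E * Q = K * (r₀ - M) := by linear_combination hP' / 2
  have hroot : Real.sqrt (M ^ 2 - a ^ 2) ^ 2 = M ^ 2 - a ^ 2 :=
    Real.sq_sqrt (by nlinarith)
  have hDpos : 0 < D := by
    have h1 : Real.sqrt (M ^ 2 - a ^ 2) < r₀ - M := by linarith
    have h0 : 0 ≤ Real.sqrt (M ^ 2 - a ^ 2) := Real.sqrt_nonneg _
    nlinarith [sq_nonneg (r₀ - M - Real.sqrt (M ^ 2 - a ^ 2))]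
  have hsc : Real.sin θ ^ 2 + Real.cos θ ^ 2 = 1 := Real.sin_sq_add_cos_sq θ
  -- Key identity
  have key : K * (2 * r₀ * D - (r₀ - M) * (r₀ ^ 2 + a ^ 2 * Real.cos θ ^ 2))
      = -(2 * r₀ * a * Q * (L - E * a * Real.sin θ ^ 2)) := by
    have hc : Real.cos θ ^ 2 = 1 - Real.sin θ ^ 2 := by linarith
    rw [hc]
    linear_combination (-2 * r₀) * hQ2 + (r₀ ^ 2 + a ^ 2 * (1 - Real.sin θ ^ 2)) * hQ1
  have hsq : (K * (2 * r₀ * D - (r₀ - M) * (r₀ ^ 2 + a ^ 2 * Real.cos θ ^ 2))) ^ 2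
      = 4 * r₀ ^ 2 * a ^ 2 * (K * D) * (L - E * a * Real.sin θ ^ 2) ^ 2 := by
    rw [key]
    linear_combination 4 * r₀ ^ 2 * a ^ 2 * (L - E * a * Real.sin θ ^ 2) ^ 2 * hQ2
  have hK2 : 0 < K ^ 2 := by positivity
  have hfin : K ^ 2 * ((2 * r₀ * D - (r₀ - M) * (r₀ ^ 2 + a ^ 2 * Real.cos θ ^ 2)) ^ 2)
      ≤ K ^ 2 * (4 * a ^ 2 * r₀ ^ 2 * D * Real.sin θ ^ 2) := by
    nlinarith [mul_le_mul_of_nonneg_left hpolar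
      (by positivity : (0:ℝ) ≤ 4 * r₀ ^ 2 * a ^ 2 * (K * D)), hsq]
  exact le_of_mul_le_mul_left hfin hK2
end

section
/- Let M > 0 and 0 < a ≤ M/2, and set Δ(r) = r² − 2Mr + a², r₊ = M + √(M² − a²). If r ≥ r₊ and θ ∈ [0, π] satisfy (r²(r − 3M) + 2ra² − (r − M)a²cos²θ)² ≤ 4a²r²Δ(r) sin²θ, then |r − 3M| < 2a. In particular, all trapped null geodesics of the Kerr space-time outside the event horizon lie within distance 2a of the photon sphere r = 3M. -/
open Real

set_option maxHeartbeats 1000000 in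
/-- **Trapped null geodesics lie within `2a` of the photon sphere.**
Let `M > 0`, `0 < a ≤ M/2`, `Δ(r) = r² − 2Mr + a²`, `r₊ = M + √(M² − a²)`. If
`r ≥ r₊` and `θ ∈ [0, π]` satisfy the trapping condition
`(r²(r − 3M) + 2ra² − (r − M)a²cos²θ)² ≤ 4a²r²Δ(r) sin²θ`, then `|r − 3M| < 2a`. -/
theorem kerr_trapped_set_near_photon_sphere
    (M a r θ : ℝ) (hM : 0 < M) (ha : 0 < a) (haM : a ≤ M / 2)
    (hr : M + Real.sqrt (M ^ 2 - a ^ 2) ≤ r)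
    (hθ : 0 ≤ θ) (hθπ : θ ≤ π)
    (htrap : (r ^ 2 * (r - 3 * M) + 2 * r * a ^ 2
          - (r - M) * a ^ 2 * Real.cos θ ^ 2) ^ 2
        ≤ 4 * a ^ 2 * r ^ 2 * (r ^ 2 - 2 * M * r + a ^ 2) * Real.sin θ ^ 2) :
    |r - 3 * M| < 2 * a := by
  have haM' : a < M := by linarith
  have hMa2 : (0:ℝ) < M ^ 2 - a ^ 2 := by nlinarith
  set s := Real.sqrt (M ^ 2 - a ^ 2) with hs_def
  have hs0 : 0 ≤ s := Real.sqrt_nonneg _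
  have hs2 : s ^ 2 = M ^ 2 - a ^ 2 := Real.sq_sqrt hMa2.le
  clear_value s
  have hrM' : 0 ≤ r - M := by linarith
  have hr0 : 0 < r := by linarith
  have hΔ : 0 ≤ r ^ 2 - 2 * M * r + a ^ 2 := by nlinarith [sq_nonneg (r - M - s)]
  have hΔ' : r ^ 2 - 2 * M * r + a ^ 2 ≤ (r - M) ^ 2 := by nlinarith
  have hc0 : 0 ≤ Real.cos θ ^ 2 := sq_nonneg _
  have hc1 : Real.cos θ ^ 2 ≤ 1 := Real.cos_sq_le_one θ
  have hsin : Real.sin θ ^ 2 = 1 - Real.cos θ ^ 2 := Real.sin_sq θ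
  rw [hsin] at htrap
  set c := Real.cos θ ^ 2 with hc_def
  clear_value c
  have hrM : M + s ≤ r := hr
  -- RHS of htrap is at most 4a²r²Δ
  have hRHS : 4 * a ^ 2 * r ^ 2 * (r ^ 2 - 2 * M * r + a ^ 2) * (1 - c)
      ≤ 4 * a ^ 2 * r ^ 2 * (r ^ 2 - 2 * M * r + a ^ 2) := by
    nlinarith [mul_nonneg (mul_nonneg (mul_nonneg (mul_nonneg (by norm_num : (0:ℝ) ≤ 4)
      (sq_nonneg a)) (sq_nonneg r)) hΔ) hc0]
  by_contra h
  push_neg at h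
  rcases le_abs.mp h with h1 | h1
  · -- case r - 3M ≥ 2a
    have hX : 2 * a * r ^ 2 + r * a ^ 2 + M * a ^ 2
        ≤ r ^ 2 * (r - 3 * M) + 2 * r * a ^ 2 - (r - M) * a ^ 2 * c := by
      nlinarith [mul_nonneg (sq_nonneg r) (by linarith : (0:ℝ) ≤ r - 3 * M - 2 * a),
        mul_nonneg (mul_nonneg hrM' (sq_nonneg a)) (by linarith : (0:ℝ) ≤ 1 - c)]
    have hXpos : (0:ℝ) ≤ 2 * a * r ^ 2 + r * a ^ 2 + M * a ^ 2 := by positivity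
    have hsq : (2 * a * r ^ 2 + r * a ^ 2 + M * a ^ 2) ^ 2
        ≤ (r ^ 2 * (r - 3 * M) + 2 * r * a ^ 2 - (r - M) * a ^ 2 * c) ^ 2 :=
      pow_le_pow_left₀ hXpos hX 2
    have h4 : 4 * a ^ 2 * r ^ 2 * (r ^ 2 - 2 * M * r + a ^ 2)
        ≤ (2 * a * r ^ 2 - 2 * a * M * r) ^ 2 := by
      nlinarith [mul_nonneg (sq_nonneg (a * r)) hMa2.le]
    have h5 : (2 * a * r ^ 2 - 2 * a * M * r) ^ 2
        < (2 * a * r ^ 2 + r * a ^ 2 + M * a ^ 2) ^ 2 := by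
      nlinarith [mul_pos (show (0:ℝ) < r * a ^ 2 + M * a ^ 2 + 2 * a * M * r by positivity)
        (show (0:ℝ) < 4 * a * r ^ 2 + r * a ^ 2 + M * a ^ 2 - 2 * a * M * r by
          nlinarith [mul_nonneg (mul_nonneg ha.le hr0.le) hrM', mul_pos ha (mul_pos hr0 hr0)])]
    linarith
  · -- case 3M - r ≥ 2a
    have hba : 0 ≤ 3 * M - 2 * a - r := by linarith
    have hg : 0 ≤ -r ^ 2 + (3 * M - 2 * a) * r - 2 * a ^ 2 + 2 * a * M := by
      nlinarith [mul_nonneg (by linarith : (0:ℝ) ≤ r - M - s) hba,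
        mul_nonneg (by linarith : (0:ℝ) ≤ M + s) hba, mul_pos ha (by linarith : (0:ℝ) < M - a)]
    have hh : 0 ≤ -r ^ 2 + (3 * M + 2 * a) * r - 2 * a ^ 2 - 2 * a * M := by
      nlinarith [mul_nonneg ha.le hrM']
    -- key: L² > 4a²Δ where L = 3Mr − r² − 2a²
    have hkey : 4 * a ^ 2 * (r ^ 2 - 2 * M * r + a ^ 2)
        < (3 * M * r - r ^ 2 - 2 * a ^ 2) ^ 2 := by
      nlinarith [mul_nonneg hg hh, mul_pos (mul_pos (mul_pos ha ha) (by norm_num : (0:ℝ) < 4)) hMa2]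
    have hL : 0 < 3 * M * r - r ^ 2 - 2 * a ^ 2 := by nlinarith [mul_nonneg ha.le hrM']
    have hY : r * (3 * M * r - r ^ 2 - 2 * a ^ 2)
        ≤ -(r ^ 2 * (r - 3 * M) + 2 * r * a ^ 2 - (r - M) * a ^ 2 * c) := by
      nlinarith [mul_nonneg (mul_nonneg hrM' (sq_nonneg a)) hc0]
    have hYpos : 0 ≤ r * (3 * M * r - r ^ 2 - 2 * a ^ 2) := (mul_pos hr0 hL).le
    have hsq : (r * (3 * M * r - r ^ 2 - 2 * a ^ 2)) ^ 2
        ≤ (-(r ^ 2 * (r - 3 * M) + 2 * r * a ^ 2 - (r - M) * a ^ 2 * c)) ^ 2 :=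
      pow_le_pow_left₀ hYpos hY 2
    have hneg : (-(r ^ 2 * (r - 3 * M) + 2 * r * a ^ 2 - (r - M) * a ^ 2 * c)) ^ 2
        = (r ^ 2 * (r - 3 * M) + 2 * r * a ^ 2 - (r - M) * a ^ 2 * c) ^ 2 := by ring
    have h6 := mul_lt_mul_of_pos_left hkey (show (0:ℝ) < r ^ 2 by positivity)
    have h7 : (r * (3 * M * r - r ^ 2 - 2 * a ^ 2)) ^ 2
        = r ^ 2 * (3 * M * r - r ^ 2 - 2 * a ^ 2) ^ 2 := by ring
    have h8 : r ^ 2 * (4 * a ^ 2 * (r ^ 2 - 2 * M * r + a ^ 2))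
        = 4 * a ^ 2 * r ^ 2 * (r ^ 2 - 2 * M * r + a ^ 2) := by ring
    linarith
end

section
/- There exists c > 0 with the following property. Let M > 0, 0 < a ≤ cM, let r satisfy |r − 3M| ≤ 2a, and let θ ∈ (0, π). If τ, Φ ∈ ℝ satisfy g^{tt}τ² + 2g^{tφ}τΦ + g^{φφ}Φ² ≤ 0 (which holds in particular for the (τ,Φ)-components of any point of the characteristic set p = 0 over (r,θ)), then |Φ| ≤ 6M|τ|. -/
open Real

private lemma kerr_aux_cross (M B τ Φ : ℝ) (hM : 0 < M) (hB0 : 0 ≤ B)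
    (hB1 : B ≤ 13/100 * M ^ 3) :
    B * (τ * Φ) ≤ 13/200 * M ^ 4 * τ ^ 2 + 13/200 * M ^ 2 * Φ ^ 2 := by
  have key : 2 * M * (τ * Φ) ≤ M ^ 2 * τ ^ 2 + Φ ^ 2 := by
    nlinarith [sq_nonneg (M * τ - Φ)]
  have h2 : 2 * M * (B * (τ * Φ)) ≤ 13/100 * M ^ 3 * (M ^ 2 * τ ^ 2 + Φ ^ 2) := by
    nlinarith [mul_le_mul_of_nonneg_left key hB0,
      mul_le_mul_of_nonneg_right hB1 (by positivity : (0:ℝ) ≤ M ^ 2 * τ ^ 2 + Φ ^ 2)]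
  nlinarith [h2, mul_pos hM hM]

private lemma kerr_aux_final (M τ Φ : ℝ) (hM : 0 < M)
    (h : 29/10 * M ^ 2 * Φ ^ 2 ≤ 85 * M ^ 4 * τ ^ 2 + 13/200 * M ^ 4 * τ ^ 2
      + 13/200 * M ^ 2 * Φ ^ 2) :
    |Φ| ≤ 6 * M * |τ| := by
  have hM2 : 0 < M ^ 2 := by positivity
  have h1 : Φ ^ 2 ≤ 36 * M ^ 2 * τ ^ 2 := by nlinarith [sq_nonneg τ, sq_nonneg Φ]
  have hx : 0 ≤ |Φ| := abs_nonneg Φ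
  have hy : (0:ℝ) ≤ 6 * M * |τ| := by positivity
  have h2 : |Φ| ^ 2 ≤ (6 * M * |τ|) ^ 2 := by
    rw [sq_abs]
    calc Φ ^ 2 ≤ 36 * M ^ 2 * τ ^ 2 := h1
      _ = (6 * M * |τ|) ^ 2 := by rw [mul_pow, mul_pow, sq_abs]; ring
  nlinarith [h2, hx, hy]

set_option maxHeartbeats 1000000 in
/-- **Bound on the angular frequency on the characteristic set near the photon
sphere.** There exists `c > 0` such that for any Kerr parameters `M > 0`,
`0 < a ≤ cM`, any `r` with `|r − 3M| ≤ 2a`, any `θ ∈ (0, π)`, and any `τ, Φ ∈ ℝ`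
with `g^{tt}τ² + 2g^{tφ}τΦ + g^{φφ}Φ² ≤ 0` (in particular for the `(τ,Φ)`-components
of points of the characteristic set `p = 0` over `(r,θ)`), one has `|Φ| ≤ 6M|τ|`.
Here `g^{tt} = −((r²+a²)² − a²Δ sin²θ)/(ρ²Δ)`, `g^{tφ} = −2aMr/(ρ²Δ)`,
`g^{φφ} = (Δ − a² sin²θ)/(ρ²Δ sin²θ)` with `Δ = r² − 2Mr + a²`,
`ρ² = r² + a²cos²θ`. -/
theorem kerr_characteristic_set_Phi_bound :
    ∃ c : ℝ, 0 < c ∧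
      ∀ M a r θ τ Φ : ℝ, 0 < M → 0 < a → a ≤ c * M →
        |r - 3 * M| ≤ 2 * a → 0 < θ → θ < π →
        (let Δ : ℝ := r ^ 2 - 2 * M * r + a ^ 2
         let ρ2 : ℝ := r ^ 2 + a ^ 2 * Real.cos θ ^ 2
         let gtt : ℝ := -(((r ^ 2 + a ^ 2) ^ 2 - a ^ 2 * Δ * Real.sin θ ^ 2) / (ρ2 * Δ))
         let gtφ : ℝ := -(2 * a * M * r / (ρ2 * Δ))
         let gφφ : ℝ := (Δ - a ^ 2 * Real.sin θ ^ 2) / (ρ2 * Δ * Real.sin θ ^ 2)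
         gtt * τ ^ 2 + 2 * gtφ * τ * Φ + gφφ * Φ ^ 2 ≤ 0) →
        |Φ| ≤ 6 * M * |τ| := by
  refine ⟨1/100, by norm_num, ?_⟩
  intro M a r θ τ Φ hM ha hac hr hθ0 hθπ h
  simp only at h
  set s : ℝ := Real.sin θ with hs_def
  have hs : 0 < s := Real.sin_pos_of_pos_of_lt_pi hθ0 hθπ
  have hs1 : s ^ 2 ≤ 1 := by
    have := Real.sin_sq_le_one θ; simpa [hs_def] using this
  have hc1 : Real.cos θ ^ 2 ≤ 1 := Real.cos_sq_le_one θ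
  have ha' : a ≤ M / 100 := by linarith
  have hrl : 3 * M - 2 * a ≤ r := by
    have := abs_le.mp hr; linarith [this.1]
  have hru : r ≤ 3 * M + 2 * a := by
    have := abs_le.mp hr; linarith [(abs_le.mp hr).2]
  have hrl' : 149/50 * M ≤ r := by linarith
  have hru' : r ≤ 151/50 * M := by linarith
  have hΔ : 0 < r ^ 2 - 2 * M * r + a ^ 2 := by nlinarith
  have hρ2 : 0 < r ^ 2 + a ^ 2 * Real.cos θ ^ 2 := by nlinarith
  set Δ : ℝ := r ^ 2 - 2 * M * r + a ^ 2 with hΔdef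
  set ρ2 : ℝ := r ^ 2 + a ^ 2 * Real.cos θ ^ 2 with hρ2def
  have hpos : 0 < ρ2 * Δ * s ^ 2 := by positivity
  -- clear denominators
  have hnum : (Δ - a ^ 2 * s ^ 2) * Φ ^ 2 ≤
      ((r ^ 2 + a ^ 2) ^ 2 - a ^ 2 * Δ * s ^ 2) * s ^ 2 * τ ^ 2
        + 4 * a * M * r * s ^ 2 * (τ * Φ) := by
    have h2 := mul_le_mul_of_nonneg_right h hpos.le
    have heq : (-(((r ^ 2 + a ^ 2) ^ 2 - a ^ 2 * Δ * s ^ 2) / (ρ2 * Δ)) * τ ^ 2 +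
        2 * -(2 * a * M * r / (ρ2 * Δ)) * τ * Φ +
        (Δ - a ^ 2 * s ^ 2) / (ρ2 * Δ * s ^ 2) * Φ ^ 2) * (ρ2 * Δ * s ^ 2)
      = (Δ - a ^ 2 * s ^ 2) * Φ ^ 2
        - (((r ^ 2 + a ^ 2) ^ 2 - a ^ 2 * Δ * s ^ 2) * s ^ 2 * τ ^ 2
          + 4 * a * M * r * s ^ 2 * (τ * Φ)) := by
      field_simp
      ring
    rw [heq] at h2
    linarith [h2]
  clear h hr
  -- bounds
  have hC : 29/10 * M ^ 2 ≤ Δ - a ^ 2 * s ^ 2 := by nlinarith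
  have hr2 : r ^ 2 ≤ (151/50) ^ 2 * M ^ 2 := by
    nlinarith [mul_le_mul hru' hru' (by linarith) (by linarith : (0:ℝ) ≤ 151/50 * M)]
  have ha2 : a ^ 2 ≤ (1/100) ^ 2 * M ^ 2 := by
    nlinarith [mul_le_mul ha' ha' ha.le (by linarith : (0:ℝ) ≤ M / 100)]
  have hA0 : (r ^ 2 + a ^ 2) ^ 2 ≤ 85 * M ^ 4 := by
    nlinarith [sq_nonneg M, sq_nonneg r, sq_nonneg a]
  have hA : ((r ^ 2 + a ^ 2) ^ 2 - a ^ 2 * Δ * s ^ 2) * s ^ 2 ≤ 85 * M ^ 4 := by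
    have h1 : 0 ≤ a ^ 2 * Δ * s ^ 2 * s ^ 2 := by positivity
    have h2 : (r ^ 2 + a ^ 2) ^ 2 * s ^ 2 ≤ (r ^ 2 + a ^ 2) ^ 2 := by
      nlinarith [sq_nonneg (r ^ 2 + a ^ 2)]
    nlinarith
  have hr0 : 0 < r := by nlinarith
  have hB0 : 0 ≤ 4 * a * M * r * s ^ 2 := by positivity
  have har : a * r ≤ M / 100 * (151/50 * M) :=
    mul_le_mul ha' hru' hr0.le (by positivity)
  have hX0 : (0:ℝ) ≤ 4 * a * M * r := by positivity
  have hX : 4 * a * M * r ≤ 13/100 * M ^ 3 := by nlinarith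
  have hB1 : 4 * a * M * r * s ^ 2 ≤ 13/100 * M ^ 3 := by
    nlinarith [mul_nonneg hX0 (by linarith : (0:ℝ) ≤ 1 - s ^ 2)]
  have hcross := kerr_aux_cross M (4 * a * M * r * s ^ 2) τ Φ hM hB0 hB1
  have hstep : 29/10 * M ^ 2 * Φ ^ 2 ≤ 85 * M ^ 4 * τ ^ 2 + 13/200 * M ^ 4 * τ ^ 2
      + 13/200 * M ^ 2 * Φ ^ 2 := by
    nlinarith [mul_le_mul_of_nonneg_right hA (sq_nonneg τ),
      mul_le_mul_of_nonneg_right hC (sq_nonneg Φ)]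
  exact kerr_aux_final M τ Φ hM (by linarith)
end

section
/- There exist constants c, C > 0 such that for every M > 0, every a with 0 ≤ a ≤ cM, and every pair (τ, Φ) with τ ≠ 0 and |Φ| ≤ 6M|τ|, the polynomial r ↦ R_a(r,τ,Φ) = (r²+a²)(r³ − 3Mr² + a²r + a²M)τ² − 2aM(r² − a²)τΦ − a²(r − M)Φ² has exactly one root r_a(τ,Φ) in the interval [5M/2, 7M/2]; this root is simple, with ∂_r R_a(r_a(τ,Φ),τ,Φ) > 0, and satisfies |r_a(τ,Φ) − 3M| ≤ Ca. -/
/-- The polynomial `R_a(r,τ,Φ)` locating the trapped set of Kerr in phase space. -/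
noncomputable def kerrR (M a τ Φ r : ℝ) : ℝ :=
  (r ^ 2 + a ^ 2) * (r ^ 3 - 3 * M * r ^ 2 + a ^ 2 * r + a ^ 2 * M) * τ ^ 2
    - 2 * a * M * (r ^ 2 - a ^ 2) * τ * Φ - a ^ 2 * (r - M) * Φ ^ 2

lemma kerrR_hasDerivAt (M a τ Φ r : ℝ) :
    HasDerivAt (fun r => kerrR M a τ Φ r)
      ((2*r*(r^3 - 3*M*r^2 + a^2*r + a^2*M) + (r^2+a^2)*(3*r^2 - 6*M*r + a^2))*τ^2
        - 2*a*M*(2*r)*τ*Φ - a^2*Φ^2) r := by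
  have h1 : HasDerivAt (fun x : ℝ => x^2 + a^2) (2*r) r := by
    simpa using (hasDerivAt_pow 2 r).add_const (a^2)
  have h2 : HasDerivAt (fun x : ℝ => x^3 - 3*M*x^2 + a^2*x + a^2*M)
      (3*r^2 - 6*M*r + a^2) r := by
    have h := (((hasDerivAt_pow 3 r).sub ((hasDerivAt_pow 2 r).const_mul (3*M))).add
      ((hasDerivAt_id r).const_mul (a^2))).add_const (a^2*M)
    refine h.congr_deriv ?_
    push_cast; ring
  have T1 := (h1.mul h2).mul_const (τ^2)
  have T2 := ((((hasDerivAt_pow 2 r).sub_const (a^2)).const_mul (2*a*M)).mul_const τ).mul_const Φ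
  have T3 := (((hasDerivAt_id r).sub_const M).const_mul (a^2)).mul_const (Φ^2)
  have h := (T1.sub T2).sub T3
  unfold kerrR
  refine h.congr_deriv ?_
  push_cast; ring

set_option maxHeartbeats 1000000 in
private lemma kerrR_left_neg (M a τ Φ : ℝ) (hM : 0 < M) (ha : 0 ≤ a) (hac : a ≤ M/100)
    (hτ2 : 0 < τ^2) (hτΦ1 : -(6*M*τ^2) ≤ τ*Φ) (hτΦ2 : τ*Φ ≤ 6*M*τ^2)
    (hΦ2 : Φ^2 ≤ 36*M^2*τ^2) (ha2 : a^2 ≤ M^2/10000) (haM : 0 ≤ a*M) :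
    kerrR M a τ Φ (5*M/2) < 0 := by
  unfold kerrR
  have e1 : (5*M/2)^3 - 3*M*(5*M/2)^2 + a^2*(5*M/2) + a^2*M ≤ -3*M^3 := by nlinarith
  have hX : (25/4:ℝ)*M^2 ≤ (5*M/2)^2 + a^2 := by nlinarith [sq_nonneg a]
  have e2 : ((5*M/2)^2 + a^2) * ((5*M/2)^3 - 3*M*(5*M/2)^2 + a^2*(5*M/2) + a^2*M)
      ≤ -75/4*M^5 := by
    nlinarith [mul_le_mul_of_nonneg_left e1 (show (0:ℝ) ≤ (5*M/2)^2 + a^2 by positivity),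
      mul_le_mul_of_nonneg_right hX (show (0:ℝ) ≤ 3*M^3 by positivity)]
  have k0 : (0:ℝ) ≤ 2*a*M*((5*M/2)^2 - a^2) := by
    nlinarith [mul_le_mul_of_nonneg_right ha2 haM]
  have k1 : 2*a*M*((5*M/2)^2 - a^2) ≤ M^4/8 := by
    nlinarith [mul_nonneg haM (sq_nonneg a),
      mul_le_mul_of_nonneg_right hac (show (0:ℝ) ≤ 25/2*M^3 by positivity)]
  have k2 : -(2*a*M*((5*M/2)^2 - a^2)*τ*Φ) ≤ 6*M*τ^2 * (M^4/8) := by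
    have h := mul_le_mul_of_nonneg_left hτΦ1 k0
    have h2 := mul_le_mul_of_nonneg_right k1 (show (0:ℝ) ≤ 6*M*τ^2 by positivity)
    nlinarith
  have t3 : (0:ℝ) ≤ a^2*((5*M/2) - M)*Φ^2 :=
    mul_nonneg (mul_nonneg (sq_nonneg a) (by linarith)) (sq_nonneg Φ)
  have e3 := mul_le_mul_of_nonneg_right e2 hτ2.le
  nlinarith [mul_pos (show (0:ℝ) < M^5 by positivity) hτ2]

set_option maxHeartbeats 1000000 in
private lemma kerrR_right_pos (M a τ Φ : ℝ) (hM : 0 < M) (ha : 0 ≤ a) (hac : a ≤ M/100)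
    (hτ2 : 0 < τ^2) (hτΦ1 : -(6*M*τ^2) ≤ τ*Φ) (hτΦ2 : τ*Φ ≤ 6*M*τ^2)
    (hΦ2 : Φ^2 ≤ 36*M^2*τ^2) (ha2 : a^2 ≤ M^2/10000) (haM : 0 ≤ a*M) :
    0 < kerrR M a τ Φ (7*M/2) := by
  unfold kerrR
  have e1 : (49/8:ℝ)*M^3 ≤ (7*M/2)^3 - 3*M*(7*M/2)^2 + a^2*(7*M/2) + a^2*M := by
    nlinarith [sq_nonneg a]
  have hX : (49/4:ℝ)*M^2 ≤ (7*M/2)^2 + a^2 := by nlinarith [sq_nonneg a]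
  have e2 : (2401/32:ℝ)*M^5 ≤
      ((7*M/2)^2 + a^2) * ((7*M/2)^3 - 3*M*(7*M/2)^2 + a^2*(7*M/2) + a^2*M) :=
    le_trans (by nlinarith) (mul_le_mul hX e1 (by positivity) (by positivity))
  have k0 : (0:ℝ) ≤ 2*a*M*((7*M/2)^2 - a^2) := by
    nlinarith [mul_le_mul_of_nonneg_right ha2 haM]
  have k1 : 2*a*M*((7*M/2)^2 - a^2) ≤ 49/200*M^4 := by
    nlinarith [mul_nonneg haM (sq_nonneg a),
      mul_le_mul_of_nonneg_right hac (show (0:ℝ) ≤ 49/2*M^3 by positivity)]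
  have k2 : 2*a*M*((7*M/2)^2 - a^2)*τ*Φ ≤ 6*M*τ^2 * (49/200*M^4) := by
    have h := mul_le_mul_of_nonneg_left hτΦ2 k0
    have h2 := mul_le_mul_of_nonneg_right k1 (show (0:ℝ) ≤ 6*M*τ^2 by positivity)
    nlinarith
  have t3 : a^2*((7*M/2) - M)*Φ^2 ≤ M^2/10000*(5/2*M)*(36*M^2*τ^2) := by
    have h1 : a^2*((7*M/2) - M)*Φ^2 ≤ a^2*((7*M/2) - M)*(36*M^2*τ^2) :=
      mul_le_mul_of_nonneg_left hΦ2 (mul_nonneg (sq_nonneg a) (by linarith))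
    have h2 := mul_le_mul_of_nonneg_right ha2
      (show (0:ℝ) ≤ (5/2*M)*(36*M^2*τ^2) by positivity)
    nlinarith
  have e3 := mul_le_mul_of_nonneg_right e2 hτ2.le
  nlinarith [mul_pos (show (0:ℝ) < M^5 by positivity) hτ2]

set_option maxHeartbeats 1000000 in
private lemma kerrR_plus_nonneg (M a τ Φ : ℝ) (hM : 0 < M) (ha : 0 ≤ a) (hac : a ≤ M/100)
    (hτ2 : 0 < τ^2) (hτΦ1 : -(6*M*τ^2) ≤ τ*Φ) (hτΦ2 : τ*Φ ≤ 6*M*τ^2)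
    (hΦ2 : Φ^2 ≤ 36*M^2*τ^2) (ha2 : a^2 ≤ M^2/10000) (haM : 0 ≤ a*M) :
    0 ≤ kerrR M a τ Φ (3*M+3*a) := by
  unfold kerrR
  have e1 : 27*M^2*a ≤ (3*M+3*a)^3 - 3*M*(3*M+3*a)^2 + a^2*(3*M+3*a) + a^2*M := by
    nlinarith [sq_nonneg a, mul_nonneg (mul_nonneg ha ha) ha,
      mul_nonneg (mul_nonneg haM ha) ha]
  have hX : (9:ℝ)*M^2 ≤ (3*M+3*a)^2 + a^2 := by nlinarith [sq_nonneg a]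
  have e2 : 243*M^4*a ≤
      ((3*M+3*a)^2 + a^2) * ((3*M+3*a)^3 - 3*M*(3*M+3*a)^2 + a^2*(3*M+3*a) + a^2*M) :=
    le_trans (by nlinarith) (mul_le_mul hX e1 (by positivity) (by positivity))
  have k0 : (0:ℝ) ≤ 2*a*M*((3*M+3*a)^2 - a^2) := by
    nlinarith [mul_le_mul_of_nonneg_right ha2 haM, mul_nonneg (mul_nonneg haM hM.le) ha]
  have k1 : 2*a*M*((3*M+3*a)^2 - a^2) ≤ 19*a*M^3 := by
    nlinarith [mul_nonneg haM (sq_nonneg a),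
      mul_le_mul_of_nonneg_right hac (show (0:ℝ) ≤ M^2 by positivity),
      mul_nonneg (mul_nonneg haM haM) ha, mul_le_mul_of_nonneg_left ha2 haM]
  have k2 : 2*a*M*((3*M+3*a)^2 - a^2)*τ*Φ ≤ 6*M*τ^2 * (19*a*M^3) := by
    have h := mul_le_mul_of_nonneg_left hτΦ2 k0
    have h2 := mul_le_mul_of_nonneg_right k1 (show (0:ℝ) ≤ 6*M*τ^2 by positivity)
    nlinarith
  have t3 : a^2*((3*M+3*a) - M)*Φ^2 ≤ (M/100*a)*(3*M)*(36*M^2*τ^2) := by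
    have h1 : a^2*((3*M+3*a) - M)*Φ^2 ≤ a^2*((3*M+3*a) - M)*(36*M^2*τ^2) :=
      mul_le_mul_of_nonneg_left hΦ2 (mul_nonneg (sq_nonneg a) (by linarith))
    have h2 : a^2*((3*M+3*a) - M) ≤ (M/100*a)*(3*M) := by
      nlinarith [mul_le_mul_of_nonneg_right hac
          (mul_nonneg ha (show (0:ℝ) ≤ 2*M+3*a by linarith)),
        mul_nonneg (mul_nonneg ha ha) ha, mul_nonneg (mul_nonneg ha ha) hM.le]
    nlinarith [mul_le_mul_of_nonneg_right h2 (show (0:ℝ) ≤ 36*M^2*τ^2 by positivity)]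
  have e3 := mul_le_mul_of_nonneg_right e2 hτ2.le
  nlinarith [mul_nonneg (mul_nonneg (show (0:ℝ) ≤ M^4 by positivity) ha) hτ2.le]

set_option maxHeartbeats 1000000 in
private lemma kerrR_minus_nonpos (M a τ Φ : ℝ) (hM : 0 < M) (ha : 0 ≤ a) (hac : a ≤ M/100)
    (hτ2 : 0 < τ^2) (hτΦ1 : -(6*M*τ^2) ≤ τ*Φ) (hτΦ2 : τ*Φ ≤ 6*M*τ^2)
    (hΦ2 : Φ^2 ≤ 36*M^2*τ^2) (ha2 : a^2 ≤ M^2/10000) (haM : 0 ≤ a*M) :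
    kerrR M a τ Φ (3*M-3*a) ≤ 0 := by
  unfold kerrR
  have hr : 297/100*M ≤ 3*M-3*a := by linarith
  have hrsq : (297/100*M)^2 ≤ (3*M-3*a)^2 := by
    nlinarith [pow_le_pow_left₀ (show (0:ℝ) ≤ 297/100*M by positivity) hr 2]
  have e1 : (3*M-3*a)^3 - 3*M*(3*M-3*a)^2 + a^2*(3*M-3*a) + a^2*M ≤ -26*a*M^2 := by
    have h1 : -3*a*(3*M-3*a)^2 ≤ -3*a*((297/100*M)^2) := by
      nlinarith [mul_nonneg ha (by linarith : (0:ℝ) ≤ (3*M-3*a)^2 - (297/100*M)^2)]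
    have h2 : a^2*(4*M-3*a) ≤ (M/100*a)*(4*M) := by
      nlinarith [mul_le_mul_of_nonneg_right hac
          (mul_nonneg ha (show (0:ℝ) ≤ 4*M by linarith)),
        mul_nonneg (mul_nonneg ha ha) ha]
    nlinarith
  have hX : (88/10:ℝ)*M^2 ≤ (3*M-3*a)^2 + a^2 := by nlinarith [sq_nonneg a]
  have e2 : ((3*M-3*a)^2 + a^2) * ((3*M-3*a)^3 - 3*M*(3*M-3*a)^2 + a^2*(3*M-3*a) + a^2*M)
      ≤ -228*a*M^4 := by
    have h1 := mul_le_mul_of_nonneg_left e1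
      (show (0:ℝ) ≤ (3*M-3*a)^2 + a^2 by positivity)
    have h2 : ((3*M-3*a)^2 + a^2) * (-26*a*M^2) ≤ (88/10*M^2) * (-26*a*M^2) := by
      nlinarith [mul_nonneg (by linarith : (0:ℝ) ≤ ((3*M-3*a)^2 + a^2) - 88/10*M^2)
        (mul_nonneg ha (show (0:ℝ) ≤ M^2 by positivity))]
    nlinarith [mul_nonneg haM (pow_nonneg hM.le 3)]
  have k0 : (0:ℝ) ≤ 2*a*M*((3*M-3*a)^2 - a^2) := by
    nlinarith [mul_nonneg haM (by nlinarith : (0:ℝ) ≤ (3*M-3*a)^2 - a^2)]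
  have k1 : 2*a*M*((3*M-3*a)^2 - a^2) ≤ 18*a*M^3 := by
    nlinarith [mul_nonneg haM (sq_nonneg a), mul_nonneg (mul_nonneg haM haM) ha,
      mul_nonneg (mul_nonneg haM ha) ha]
  have k2 : -(2*a*M*((3*M-3*a)^2 - a^2)*τ*Φ) ≤ 6*M*τ^2 * (18*a*M^3) := by
    have h := mul_le_mul_of_nonneg_left hτΦ1 k0
    have h2 := mul_le_mul_of_nonneg_right k1 (show (0:ℝ) ≤ 6*M*τ^2 by positivity)
    nlinarith
  have t3 : (0:ℝ) ≤ a^2*((3*M-3*a) - M)*Φ^2 :=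
    mul_nonneg (mul_nonneg (sq_nonneg a) (by linarith)) (sq_nonneg Φ)
  have e3 := mul_le_mul_of_nonneg_right e2 hτ2.le
  nlinarith [mul_nonneg (mul_nonneg (show (0:ℝ) ≤ M^4 by positivity) ha) hτ2.le]

set_option maxHeartbeats 1000000 in
/-- **Unique simple root of `R_a` near the photon sphere.** There exist `c, C > 0`
such that for every `M > 0`, `0 ≤ a ≤ cM`, and every `(τ, Φ)` with `τ ≠ 0` and
`|Φ| ≤ 6M|τ|`, the function `r ↦ R_a(r,τ,Φ)` has exactly one root `r_a(τ,Φ)` in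
`[5M/2, 7M/2]`; this root is simple, with `∂_r R_a > 0` there, and satisfies
`|r_a(τ,Φ) − 3M| ≤ Ca`. -/
theorem kerrR_unique_root_near_photon_sphere :
    ∃ c C : ℝ, 0 < c ∧ 0 < C ∧
      ∀ M a τ Φ : ℝ, 0 < M → 0 ≤ a → a ≤ c * M → τ ≠ 0 → |Φ| ≤ 6 * M * |τ| →
        ∃ r₀ : ℝ, r₀ ∈ Set.Icc (5 * M / 2) (7 * M / 2) ∧
          kerrR M a τ Φ r₀ = 0 ∧
          0 < deriv (fun r => kerrR M a τ Φ r) r₀ ∧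
          |r₀ - 3 * M| ≤ C * a ∧
          ∀ r ∈ Set.Icc (5 * M / 2) (7 * M / 2), kerrR M a τ Φ r = 0 → r = r₀ := by
  refine ⟨1/100, 3, by norm_num, by norm_num, ?_⟩
  intro M a τ Φ hM ha hacM hτ hΦ
  have hac : a ≤ M/100 := by linarith
  have hτ2 : 0 < τ^2 := by positivity
  have habs : |τ*Φ| ≤ 6*M*τ^2 := by
    rw [abs_mul]
    calc |τ| * |Φ| ≤ |τ| * (6 * M * |τ|) := mul_le_mul_of_nonneg_left hΦ (abs_nonneg τ)
    _ = 6 * M * (|τ| * |τ|) := by ring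
    _ = 6*M*τ^2 := by rw [abs_mul_abs_self]; ring
  obtain ⟨hτΦ1, hτΦ2⟩ := abs_le.mp habs
  have hΦ2 : Φ^2 ≤ 36*M^2*τ^2 := by
    have h := mul_self_le_mul_self (abs_nonneg Φ) hΦ
    have h1 := abs_mul_abs_self Φ
    have h2 := abs_mul_abs_self τ
    nlinarith
  have ha2 : a^2 ≤ M^2/10000 := by nlinarith
  have haM : 0 ≤ a*M := mul_nonneg ha hM.le
  -- derivative is positive on the interval
  have hderiv : ∀ r : ℝ, deriv (fun r => kerrR M a τ Φ r) r
      = (2*r*(r^3 - 3*M*r^2 + a^2*r + a^2*M) + (r^2+a^2)*(3*r^2 - 6*M*r + a^2))*τ^2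
        - 2*a*M*(2*r)*τ*Φ - a^2*Φ^2 := fun r => (kerrR_hasDerivAt M a τ Φ r).deriv
  have hDpos : ∀ r ∈ Set.Icc (5 * M / 2) (7 * M / 2),
      0 < deriv (fun r => kerrR M a τ Φ r) r := by
    rintro r ⟨hr1, hr2⟩
    rw [hderiv]
    have hr0 : 0 < r := by linarith
    have h3 : (5*M/2)^3 ≤ r^3 := by
      have := pow_le_pow_left₀ (by positivity : (0:ℝ) ≤ 5*M/2) (by linarith : 5*M/2 ≤ r) 3
      linarith
    have h4 : M/2 ≤ 5*r - 12*M := by linarith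
    have key : 125/16 * M^4 ≤ 5*r^4 - 12*M*r^3 := by
      have := mul_le_mul h3 h4 (by linarith) (by positivity)
      nlinarith
    have k1 : 125/16*M^4*τ^2 ≤ (5*r^4 - 12*M*r^3)*τ^2 :=
      mul_le_mul_of_nonneg_right key hτ2.le
    have h2M : 0 ≤ 3*r^2 - 6*M*r := by nlinarith
    have hN : 0 ≤ (2*r*(a^2*r + a^2*M) + a^2*(3*r^2 - 6*M*r + a^2) + r^2*a^2)*τ^2 := by
      have : 0 ≤ 2*r*(a^2*r + a^2*M) + a^2*(3*r^2 - 6*M*r + a^2) + r^2*a^2 := by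
        nlinarith [mul_nonneg (sq_nonneg a) h2M, sq_nonneg a, sq_nonneg r, sq_nonneg (a*a)]
      exact mul_nonneg this hτ2.le
    have k0 : (0:ℝ) ≤ 4*a*M*r := by positivity
    have hA : -(2*a*M*(2*r)*τ*Φ) ≤ 24*a*M^2*r*τ^2 := by
      have := mul_le_mul_of_nonneg_left hτΦ1 k0
      nlinarith
    have hC : 24*a*M^2*r*τ^2 ≤ 21/25*M^4*τ^2 := by
      have har : a*r ≤ (M/100)*(7*M/2) := mul_le_mul hac (by linarith) hr0.le (by positivity)
      have := mul_le_mul_of_nonneg_right har (show (0:ℝ) ≤ 24*M^2*τ^2 by positivity)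
      linarith [this]
    have hB : a^2*Φ^2 ≤ 36/10000*M^4*τ^2 := by
      calc a^2*Φ^2 ≤ a^2*(36*M^2*τ^2) := mul_le_mul_of_nonneg_left hΦ2 (sq_nonneg a)
      _ ≤ M^2/10000*(36*M^2*τ^2) := mul_le_mul_of_nonneg_right ha2 (by positivity)
      _ = 36/10000*M^4*τ^2 := by ring
    have hMτ : 0 < M^4*τ^2 := by positivity
    nlinarith [k1, hN, hA, hC, hB, hMτ]
  -- continuity and strict monotonicity
  have hcont : ContinuousOn (fun r => kerrR M a τ Φ r) (Set.Icc (5 * M / 2) (7 * M / 2)) :=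
    fun r _ => (kerrR_hasDerivAt M a τ Φ r).differentiableAt.continuousAt.continuousWithinAt
  have hmono : StrictMonoOn (fun r => kerrR M a τ Φ r) (Set.Icc (5 * M / 2) (7 * M / 2)) :=
    strictMonoOn_of_deriv_pos (convex_Icc _ _) hcont
      (fun r hr => hDpos r (interior_subset hr))
  have hleft : kerrR M a τ Φ (5*M/2) < 0 :=
    kerrR_left_neg M a τ Φ hM ha hac hτ2 hτΦ1 hτΦ2 hΦ2 ha2 haM
  have hright : 0 < kerrR M a τ Φ (7*M/2) :=
    kerrR_right_pos M a τ Φ hM ha hac hτ2 hτΦ1 hτΦ2 hΦ2 ha2 haM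
  have hplus : 0 ≤ kerrR M a τ Φ (3*M+3*a) :=
    kerrR_plus_nonneg M a τ Φ hM ha hac hτ2 hτΦ1 hτΦ2 hΦ2 ha2 haM
  have hminus : kerrR M a τ Φ (3*M-3*a) ≤ 0 :=
    kerrR_minus_nonpos M a τ Φ hM ha hac hτ2 hτΦ1 hτΦ2 hΦ2 ha2 haM
  -- existence of the root via IVT
  have hle : 5 * M / 2 ≤ 7 * M / 2 := by linarith
  have h0mem : (0:ℝ) ∈ Set.Icc (kerrR M a τ Φ (5 * M / 2)) (kerrR M a τ Φ (7 * M / 2)) := by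
    constructor
    · show kerrR M a τ Φ (5 * M / 2) ≤ 0
      have : (5:ℝ) * M / 2 = 5*M/2 := by ring
      rw [this]; exact hleft.le
    · show (0:ℝ) ≤ kerrR M a τ Φ (7 * M / 2)
      have : (7:ℝ) * M / 2 = 7*M/2 := by ring
      rw [this]; exact hright.le
  obtain ⟨r₀, hr₀mem, hr₀⟩ := intermediate_value_Icc hle hcont h0mem
  have hr₀ : kerrR M a τ Φ r₀ = 0 := hr₀
  -- the root is neither endpoint value issue: memberships of 3M±3a
  have hmem3p : 3*M+3*a ∈ Set.Icc (5 * M / 2) (7 * M / 2) := ⟨by linarith, by linarith⟩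
  have hmem3m : 3*M-3*a ∈ Set.Icc (5 * M / 2) (7 * M / 2) := ⟨by linarith, by linarith⟩
  refine ⟨r₀, hr₀mem, hr₀, hDpos r₀ hr₀mem, ?_, ?_⟩
  · -- |r₀ - 3M| ≤ 3a
    have hub : r₀ ≤ 3*M+3*a := by
      by_contra hcon
      push_neg at hcon
      have h := hmono hmem3p hr₀mem hcon
      simp only [hr₀] at h
      linarith
    have hlb : 3*M-3*a ≤ r₀ := by
      by_contra hcon
      push_neg at hcon
      have h := hmono hr₀mem hmem3m hcon
      simp only [hr₀] at h
      linarith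
    rw [abs_le]
    constructor <;> linarith
  · intro r hr hfr
    exact hmono.injOn hr hr₀mem (by simp only [hfr, hr₀])
end

section
/- Let M > 0 and a ∈ ℝ. For all r with Δ(r) ≠ 0, all θ with sin θ ≠ 0, and all (τ, ξ, Φ, Θ) ∈ ℝ⁴, one has the identity ∂_r(ρ²p)(r,θ,τ,ξ,Φ,Θ) = −2R_a(r,τ,Φ)/Δ(r)² + 2(r − M)ξ², where R_a(r,τ,Φ) = (r²+a²)(r³ − 3Mr² + a²r + a²M)τ² − 2aM(r² − a²)τΦ − a²(r − M)Φ². -/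
open Real

/-- **Radial derivative of `ρ²p` for the Kerr principal symbol.** For `M > 0`,
`a ∈ ℝ`, all `r` with `Δ(r) = r² − 2Mr + a² ≠ 0`, all `θ` with `sin θ ≠ 0` and all
`(τ, ξ, Φ, Θ) ∈ ℝ⁴`, one has
`∂_r(ρ²p) = −2R_a(r,τ,Φ)/Δ(r)² + 2(r − M)ξ²`, where
`ρ²p = −((r²+a²)² − a²Δ sin²θ)τ²/Δ − 4aMrτΦ/Δ + (Δ − a²sin²θ)Φ²/(Δ sin²θ) + Δξ² + Θ²`
and `R_a(r,τ,Φ) = (r²+a²)(r³ − 3Mr² + a²r + a²M)τ² − 2aM(r² − a²)τΦ − a²(r − M)Φ²`. -/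
theorem kerr_deriv_rho2p
    (M a r θ τ ξ Φ Θ : ℝ) (hM : 0 < M)
    (hΔ : r ^ 2 - 2 * M * r + a ^ 2 ≠ 0) (hθ : Real.sin θ ≠ 0) :
    deriv (fun s : ℝ =>
        -(((s ^ 2 + a ^ 2) ^ 2 - a ^ 2 * (s ^ 2 - 2 * M * s + a ^ 2) * Real.sin θ ^ 2)
            * τ ^ 2 / (s ^ 2 - 2 * M * s + a ^ 2))
        - 4 * a * M * s * τ * Φ / (s ^ 2 - 2 * M * s + a ^ 2)
        + ((s ^ 2 - 2 * M * s + a ^ 2) - a ^ 2 * Real.sin θ ^ 2) * Φ ^ 2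
            / ((s ^ 2 - 2 * M * s + a ^ 2) * Real.sin θ ^ 2)
        + (s ^ 2 - 2 * M * s + a ^ 2) * ξ ^ 2 + Θ ^ 2) r
      = -2 * ((r ^ 2 + a ^ 2) * (r ^ 3 - 3 * M * r ^ 2 + a ^ 2 * r + a ^ 2 * M) * τ ^ 2
            - 2 * a * M * (r ^ 2 - a ^ 2) * τ * Φ - a ^ 2 * (r - M) * Φ ^ 2)
          / (r ^ 2 - 2 * M * r + a ^ 2) ^ 2
        + 2 * (r - M) * ξ ^ 2 := by
  have hs2 : HasDerivAt (fun s : ℝ => s ^ 2) (2 * r) r := by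
    simpa using hasDerivAt_pow 2 r
  have hD : HasDerivAt (fun s : ℝ => s ^ 2 - 2 * M * s + a ^ 2) (2 * r - 2 * M) r := by
    simpa using (hs2.sub ((hasDerivAt_id r).const_mul (2 * M))).add_const (a ^ 2)
  have h1 : HasDerivAt (fun s : ℝ =>
      ((s ^ 2 + a ^ 2) ^ 2 - a ^ 2 * (s ^ 2 - 2 * M * s + a ^ 2) * Real.sin θ ^ 2) * τ ^ 2)
      ((2 * (r ^ 2 + a ^ 2) * (2 * r) - a ^ 2 * (2 * r - 2 * M) * Real.sin θ ^ 2) * τ ^ 2) r := by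
    have ha : HasDerivAt (fun s : ℝ => (s ^ 2 + a ^ 2) ^ 2) (2 * (r ^ 2 + a ^ 2) * (2 * r)) r := by
      simpa using (hs2.add_const (a ^ 2)).fun_pow 2
    exact (ha.sub ((hD.const_mul (a ^ 2)).mul_const (Real.sin θ ^ 2))).mul_const (τ ^ 2)
  have h2 : HasDerivAt (fun s : ℝ => 4 * a * M * s * τ * Φ) (4 * a * M * τ * Φ) r := by
    have := (((hasDerivAt_id r).const_mul (4 * a * M)).mul_const τ).mul_const Φ
    simpa using this
  have h3 : HasDerivAt (fun s : ℝ =>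
      ((s ^ 2 - 2 * M * s + a ^ 2) - a ^ 2 * Real.sin θ ^ 2) * Φ ^ 2)
      ((2 * r - 2 * M) * Φ ^ 2) r :=
    (hD.sub_const (a ^ 2 * Real.sin θ ^ 2)).mul_const (Φ ^ 2)
  have hden : HasDerivAt (fun s : ℝ => (s ^ 2 - 2 * M * s + a ^ 2) * Real.sin θ ^ 2)
      ((2 * r - 2 * M) * Real.sin θ ^ 2) r := hD.mul_const (Real.sin θ ^ 2)
  have hden0 : (r ^ 2 - 2 * M * r + a ^ 2) * Real.sin θ ^ 2 ≠ 0 :=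
    mul_ne_zero hΔ (pow_ne_zero 2 hθ)
  have H := (((((h1.fun_div hD hΔ).fun_neg).fun_sub (h2.fun_div hD hΔ)).fun_add
      (h3.fun_div hden hden0)).fun_add (hD.mul_const (ξ ^ 2))).add_const (Θ ^ 2)
  rw [H.deriv]
  field_simp
  ring
end

section
/- Let M > 0 and let b : (2M, ∞) → ℝ be differentiable. Define P(r,τ,ξ,λ) = −(r³/(r − 2M))τ² + r(r − 2M)ξ² + λ² and s(r,ξ) = b(r)(1 − 3M/r)ξ. Then for all r > 2M and all τ, ξ, λ ∈ ℝ: (1/2)(∂_ξP · ∂_r s − ∂_r P · ∂_ξ s) = α_S²(r)τ² + β_S²(r)ξ², where α_S²(r) = r b(r)(r − 3M)²/(r − 2M)² and β_S²(r) = (3M/r²)b(r)(r² − 2Mr) + (1 − 3M/r)(b′(r)(r² − 2Mr) − b(r)(r − M)). -/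
/-- **The Schwarzschild Poisson bracket computation.** Let `M > 0` and let
`b : (2M, ∞) → ℝ` be differentiable with derivative `b′`. With
`P(r,τ,ξ,λ) = −(r³/(r − 2M))τ² + r(r − 2M)ξ² + λ²` (that is, `r²p_S`) and
`s(r,ξ) = b(r)(1 − 3M/r)ξ`, for all `r > 2M` and all `τ, ξ, λ ∈ ℝ`:
`(1/2)(∂_ξP ∂_r s − ∂_r P ∂_ξ s) = α_S²(r)τ² + β_S²(r)ξ²`, where
`α_S²(r) = r b(r)(r − 3M)²/(r − 2M)²` and
`β_S²(r) = (3M/r²)b(r)(r² − 2Mr) + (1 − 3M/r)(b′(r)(r² − 2Mr) − b(r)(r − M))`. -/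
theorem schwarzschild_poisson_bracket
    (M : ℝ) (hM : 0 < M) (b b' : ℝ → ℝ)
    (hb : ∀ r : ℝ, 2 * M < r → HasDerivAt b (b' r) r)
    (r τ ξ lam : ℝ) (hr : 2 * M < r) :
    (1 / 2) *
        (deriv (fun ξ' : ℝ =>
            -(r ^ 3 / (r - 2 * M)) * τ ^ 2 + r * (r - 2 * M) * ξ' ^ 2 + lam ^ 2) ξ *
          deriv (fun r' : ℝ => b r' * (1 - 3 * M / r') * ξ) r -
        deriv (fun r' : ℝ =>
            -(r' ^ 3 / (r' - 2 * M)) * τ ^ 2 + r' * (r' - 2 * M) * ξ ^ 2 + lam ^ 2) r *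
          deriv (fun ξ' : ℝ => b r * (1 - 3 * M / r) * ξ') ξ)
      = (r * b r * (r - 3 * M) ^ 2 / (r - 2 * M) ^ 2) * τ ^ 2
        + ((3 * M / r ^ 2) * b r * (r ^ 2 - 2 * M * r)
            + (1 - 3 * M / r) * (b' r * (r ^ 2 - 2 * M * r) - b r * (r - M))) * ξ ^ 2 := by
  have hr0 : (0:ℝ) < r := lt_trans (by linarith) hr
  have hrne : r ≠ 0 := ne_of_gt hr0
  have hsub : r - 2 * M ≠ 0 := by linarith
  have h1 : deriv (fun ξ' : ℝ =>
      -(r ^ 3 / (r - 2 * M)) * τ ^ 2 + r * (r - 2 * M) * ξ' ^ 2 + lam ^ 2) ξ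
      = r * (r - 2 * M) * (2 * ξ) := by
    have : HasDerivAt (fun ξ' : ℝ =>
        -(r ^ 3 / (r - 2 * M)) * τ ^ 2 + r * (r - 2 * M) * ξ' ^ 2 + lam ^ 2)
        (0 + r * (r - 2 * M) * (2 * ξ) + 0) ξ := by
      exact (((hasDerivAt_const ξ _).add
        ((((hasDerivAt_id ξ).pow 2).const_mul (r * (r - 2 * M))).congr_deriv
          (by simp only [id_eq]; ring))).add (hasDerivAt_const ξ _))
    simpa using this.deriv
  have h2 : deriv (fun r' : ℝ => b r' * (1 - 3 * M / r') * ξ) r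
      = (b' r * (1 - 3 * M / r) + b r * (3 * M / r ^ 2)) * ξ := by
    have hinv : HasDerivAt (fun r' : ℝ => (1 - 3 * M / r')) (3 * M / r ^ 2) r := by
      have hd := (hasDerivAt_const r (3 * M)).div (hasDerivAt_id r) hrne
      have := hd.const_sub 1
      refine this.congr_deriv (Eq.symm ?_)
      simp only [id_eq]
      field_simp
      ring
    have := (((hb r hr).mul hinv).mul_const ξ)
    simpa using this.deriv
  have h3 : deriv (fun r' : ℝ =>
      -(r' ^ 3 / (r' - 2 * M)) * τ ^ 2 + r' * (r' - 2 * M) * ξ ^ 2 + lam ^ 2) r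
      = -((3 * r ^ 2 * (r - 2 * M) - r ^ 3) / (r - 2 * M) ^ 2) * τ ^ 2
        + (2 * r - 2 * M) * ξ ^ 2 := by
    have hq : HasDerivAt (fun r' : ℝ => r' ^ 3 / (r' - 2 * M))
        ((3 * r ^ 2 * (r - 2 * M) - r ^ 3) / (r - 2 * M) ^ 2) r := by
      have hnum : HasDerivAt (fun r' : ℝ => r' ^ 3) (3 * r ^ 2) r := by
        simpa using (hasDerivAt_pow 3 r)
      have hden : HasDerivAt (fun r' : ℝ => r' - 2 * M) 1 r := by
        simpa using (hasDerivAt_id r).sub_const (2 * M)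
      have := hnum.div hden hsub
      refine this.congr_deriv (Eq.symm ?_)
      ring
    have hprod : HasDerivAt (fun r' : ℝ => r' * (r' - 2 * M)) (2 * r - 2 * M) r := by
      have := (hasDerivAt_id r).mul ((hasDerivAt_id r).sub_const (2 * M))
      refine this.congr_deriv (Eq.symm ?_)
      simp only [id_eq]
      ring
    have := (((hq.neg.mul_const (τ ^ 2)).add (hprod.mul_const (ξ ^ 2))).add
      (hasDerivAt_const r (lam ^ 2)))
    exact this.deriv.trans (by ring)
  have h4 : deriv (fun ξ' : ℝ => b r * (1 - 3 * M / r) * ξ') ξ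
      = b r * (1 - 3 * M / r) := by
    simpa using ((hasDerivAt_id ξ).const_mul (b r * (1 - 3 * M / r))).deriv
  rw [h1, h2, h3, h4]
  field_simp
  ring
end
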